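/- arXiv:1702.02257 — 8 statements merged into one kernel-verified Lean document; each statement's English description precedes it below -/
import Mathlib

section
/- Let 𝒰 be a join-specification of a poset P. Then the canonical map φ : P → Γ_𝒰[𝒫(P)], φ(p) = ↓p, preserves joins of sets in 𝒰: for S ∈ 𝒰, the join of {↓s : s ∈ S} in the complete lattice of 𝒰-ideals equals ↓(⋁S). -/
universe u

variable {P : Type u} [PartialOrder P]

/-- The downward closure of a set in a poset. -/
def dcl (S : Set P) : Set P := {q | ∃ s ∈ S, q ≤ s}

/-- A join-specification: a collection of nonempty subsets each having a join,
containing all singletons. -/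
def IsJoinSpec (U : Set (Set P)) : Prop :=
  (∀ S ∈ U, ∃ j, IsLUB S j) ∧ (∀ p : P, {p} ∈ U) ∧ ∅ ∉ U

/-- A `U`-ideal: a down-set closed under joins of members of `U` contained in it. -/
def IsUIdeal (U : Set (Set P)) (I : Set P) : Prop :=
  IsLowerSet I ∧ ∀ S ∈ U, S ⊆ I → ∀ j, IsLUB S j → j ∈ I

/-- The smallest `U`-ideal containing `S`. -/
def GammaU (U : Set (Set P)) (S : Set P) : Set P :=
  ⋂₀ {I | IsUIdeal U I ∧ S ⊆ I}

/-- A standard closure operator on the powerset of a poset. -/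
def IsStdClosure (Γ : Set P → Set P) : Prop :=
  (∀ S, S ⊆ Γ S) ∧ (∀ S T, S ⊆ T → Γ S ⊆ Γ T) ∧ (∀ S, Γ (Γ S) = Γ S) ∧
  (∀ p : P, Γ {p} = {q | q ≤ p})

/-- The join-specification induced by a standard closure operator. -/
def UGamma (Γ : Set P → Set P) : Set (Set P) :=
  {S | (∃ j, IsLUB S j) ∧ ∀ C, Γ C = C → S ⊆ C → ∀ j, IsLUB S j → j ∈ C}

theorem canonical_map_preserves_specified_joins
    (U : Set (Set P)) (hU : IsJoinSpec U) (S : Set P) (hS : S ∈ U)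
    (j : P) (hj : IsLUB S j) :
    GammaU U (⋃ s ∈ S, {q : P | q ≤ s}) = {q : P | q ≤ j} := by
  apply subset_antisymm
  · apply Set.sInter_subset_of_mem
    refine ⟨⟨fun a b hba ha => le_trans hba ha, fun T _ hTI t ht => ht.2 fun x hx => hTI hx⟩, ?_⟩
    intro q hq
    simp only [Set.mem_iUnion] at hq
    obtain ⟨s, hs, hqs⟩ := hq
    exact le_trans hqs (hj.1 hs)
  · intro q hq I hI
    obtain ⟨⟨hlow, hclose⟩, hsub⟩ := hI
    have hSI : S ⊆ I := fun s hs => hsub (Set.mem_iUnion.2 ⟨s, Set.mem_iUnion.2 ⟨hs, le_refl s⟩⟩)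
    exact hlow hq (hclose S hS hSI j hj)
end

section
/- Let Γ be a standard closure operator on 𝒫(P), and define 𝒰_Γ = {S ⊆ P : ⋁S exists and every Γ-closed set containing S contains ⋁S}. Then for any S ⊆ P with ⋁S existing: S ∈ 𝒰_Γ if and only if φ(⋁S) = ⋁φ[S] in the complete lattice of Γ-closed sets, where φ(p) = ↓p. -/
universe u

variable {P : Type u} [PartialOrder P]

theorem mem_UGamma_iff_join_preserved
    (Γ : Set P → Set P) (hΓ : IsStdClosure Γ) (S : Set P) (j : P) (hj : IsLUB S j) :
    S ∈ UGamma Γ ↔ Γ (⋃ s ∈ S, {q : P | q ≤ s}) = {q : P | q ≤ j} := by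
  obtain ⟨hext, hmono, hidem, hsing⟩ := hΓ
  -- Γ of any set is a lower set
  have hlow : ∀ C : Set P, ∀ p ∈ Γ C, ∀ q, q ≤ p → q ∈ Γ C := by
    intro C p hp q hq
    have h1 : ({p} : Set P) ⊆ Γ C := by simpa using hp
    have h2 : Γ {p} ⊆ Γ C := (hidem C) ▸ hmono _ _ h1
    exact h2 (by simpa [hsing p] using hq)
  have hSsub : ∀ s ∈ S, s ∈ Γ (⋃ s ∈ S, {q : P | q ≤ s}) := by
    intro s hs
    exact hext _ (Set.mem_biUnion hs (le_refl s))
  constructor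
  · rintro ⟨-, hU⟩
    apply Set.Subset.antisymm
    · have h1 : (⋃ s ∈ S, {q : P | q ≤ s}) ⊆ {q : P | q ≤ j} := by
        intro q hq
        obtain ⟨s, hs, hqs⟩ := Set.mem_iUnion₂.mp hq
        exact le_trans hqs (hj.1 hs)
      have h2 : Γ (⋃ s ∈ S, {q : P | q ≤ s}) ⊆ Γ {q | q ≤ j} := hmono _ _ h1
      have h3 : Γ {q : P | q ≤ j} = {q | q ≤ j} := by
        rw [← hsing j, hidem]
      exact h3 ▸ h2
    · have hjmem : j ∈ Γ (⋃ s ∈ S, {q : P | q ≤ s}) :=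
        hU _ (hidem _) (fun s hs => hSsub s hs) j hj
      intro q hq
      exact hlow _ j hjmem q hq
  · intro hEq
    refine ⟨⟨j, hj⟩, ?_⟩
    intro C hC hSC j' hj'
    have hjj : j' = j := hj'.unique hj
    subst hjj
    have h1 : (⋃ s ∈ S, {q : P | q ≤ s}) ⊆ C := by
      intro q hq
      obtain ⟨s, hs, hqs⟩ := Set.mem_iUnion₂.mp hq
      exact hC ▸ hlow C s (hC.symm ▸ hext C (hSC hs)) q hqs
    have h2 : Γ (⋃ s ∈ S, {q : P | q ≤ s}) ⊆ C := hC ▸ hmono _ _ h1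
    exact h2 (hEq ▸ le_refl j')
end

section
/- The maps f(𝒰) = Γ_𝒰 and g(Γ) = 𝒰_Γ form a Galois connection between the lattice of join-specifications of P (ordered by inclusion) and the lattice of standard closure operators on P (ordered pointwise): for every standard closure operator Γ and join-specification 𝒰, Γ_𝒰(T) ⊆ Γ(T) for all T ⊆ P if and only if 𝒰 ⊆ 𝒰_Γ. -/
universe u

variable {P : Type u} [PartialOrder P]

theorem galois_connection_joinspec_closure
    (Γ : Set P → Set P) (hΓ : IsStdClosure Γ)
    (U : Set (Set P)) (hU : IsJoinSpec U) :
    (∀ T : Set P, GammaU U T ⊆ Γ T) ↔ U ⊆ UGamma Γ := by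
  obtain ⟨hext, hmono, hidem, hsing⟩ := hΓ
  have hideal : ∀ T : Set P, IsUIdeal U (GammaU U T) ∧ T ⊆ GammaU U T := by
    intro T
    refine ⟨⟨?_, ?_⟩, ?_⟩
    · intro a b hba ha I hI
      exact hI.1.1 hba (ha I hI)
    · intro S hS hSsub j hj I hI
      exact hI.1.2 S hS (fun x hx => hSsub hx I hI) j hj
    · intro t ht I hI
      exact hI.2 ht
  constructor
  · intro h S hS
    obtain ⟨j, hj⟩ := hU.1 S hS
    refine ⟨⟨j, hj⟩, fun C hC hSC j' hj' => ?_⟩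
    have : j' ∈ GammaU U S := (hideal S).1.2 S hS (hideal S).2 j' hj'
    have : j' ∈ Γ S := h S this
    have : j' ∈ Γ C := hmono S C hSC this
    rwa [hC] at this
  · intro h T x hx
    refine hx (Γ T) ⟨⟨?_, ?_⟩, hext T⟩
    · intro a b hba ha
      have : b ∈ Γ {a} := by rw [hsing a]; exact hba
      have : b ∈ Γ (Γ T) := hmono {a} (Γ T) (by simpa using ha) this
      rwa [hidem T] at this
    · intro S hS hSsub j hj
      exact (h hS).2 (Γ T) (hidem T) hSsub j hj
end

section
/- Let 𝒱 be a join-specification of P, Φ = Γ_𝒱, and define Υ by transfinite recursion: Υ₀(S) = ↓S; Υ_{α+1}(S) = {⋁T : T ∈ 𝒰_Φ, T ⊆ Υ_α(S)}; Υ_λ(S) = ⋃_{β<λ} Υ_β(S) for limit λ; and Υ(S) = Υ_{χ'}(S) where χ' is the smallest regular cardinal at least the radius of 𝒰_Φ. Then Υ(S) ⊆ Φ(S) for all S ⊆ P. -/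
universe u

variable {P : Type u} [PartialOrder P]

/-- The radius of a join-specification: the smallest cardinal exceeding the
cardinality of each of its members. -/
noncomputable def radius (U : Set (Set P)) : Cardinal :=
  ⨆ S : U, Order.succ (Cardinal.mk S.1)

/-- The ordinal of the smallest regular cardinal at least the radius of `U`. -/
noncomputable def chiOrd (U : Set (Set P)) : Ordinal :=
  (sInf {c : Cardinal | c.IsRegular ∧ radius U ≤ c}).ord

/-- The transfinite iteration building the smallest `U`-ideal (with downward
closure at successor steps). -/
noncomputable def gammaIter (U : Set (Set P)) (S : Set P) (o : Ordinal) : Set P :=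
  Ordinal.limitRecOn o (dcl S)
    (fun _ ih => dcl {p | ∃ T ∈ U, T ⊆ ih ∧ IsLUB T p})
    (fun o _ ih => ⋃ (b : Ordinal) (h : b < o), ih b h)

/-- The transfinite iteration without downward closure at successor steps. -/
noncomputable def upsIter (U : Set (Set P)) (S : Set P) (o : Ordinal) : Set P :=
  Ordinal.limitRecOn o (dcl S)
    (fun _ ih => {p | ∃ T ∈ U, T ⊆ ih ∧ IsLUB T p})
    (fun o _ ih => ⋃ (b : Ordinal) (h : b < o), ih b h)

/-- The operator `Υ` built from `𝒰_Φ` where `Φ = Γ_𝒱`. -/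
noncomputable def Upsilon (V : Set (Set P)) (S : Set P) : Set P :=
  upsIter (UGamma (GammaU V)) S (chiOrd (UGamma (GammaU V)))

/- Υ only ever adds joins of members of `𝒰_Φ`, and `Φ(S)` is a `Φ`-closed down-set containing `S`,
so by the very definition of `𝒰_Φ` every stage of the recursion stays inside `Φ(S)`. -/

section UIdeal

variable {U : Set (Set P)} {S C : Set P}

lemma dcl_subset (hC : IsLowerSet C) (hS : S ⊆ C) : dcl S ⊆ C := by
  rintro q ⟨s, hs, hqs⟩
  exact hC hqs (hS hs)

lemma upsIter_subset_of_isUIdeal (hC : IsUIdeal U C) (hS : S ⊆ C) (o : Ordinal) :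
    upsIter U S o ⊆ C := by
  induction o using Ordinal.limitRecOn with
  | zero =>
    rw [upsIter, Ordinal.limitRecOn_zero]
    exact dcl_subset hC.1 hS
  | add_one o ih =>
    rw [upsIter, Ordinal.limitRecOn_add_one]
    rintro p ⟨T, hT, hTo, hp⟩
    exact hC.2 T hT (hTo.trans ih) p hp
  | limit o ho ih =>
    rw [upsIter, Ordinal.limitRecOn_limit _ _ _ _ ho]
    exact Set.iUnion₂_subset ih

lemma isUIdeal_uGamma_of_fixed {Γ : Set P → Set P} (hC : IsLowerSet C) (hΓC : Γ C = C) :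
    IsUIdeal (UGamma Γ) C :=
  ⟨hC, fun _ hT hTC j hj => hT.2 C hΓC hTC j hj⟩

end UIdeal

section GammaU

variable (V : Set (Set P)) (S : Set P)

lemma subset_gammaU : S ⊆ GammaU V S :=
  fun _ hx _ hI => hI.2 hx

lemma isUIdeal_gammaU : IsUIdeal V (GammaU V S) :=
  ⟨fun _ _ hba ha I hI => hI.1.1 hba (ha I hI),
    fun T hT hTS j hj I hI => hI.1.2 T hT (fun _ hx => hTS hx I hI) j hj⟩

lemma gammaU_idem : GammaU V (GammaU V S) = GammaU V S :=
  Set.Subset.antisymm (Set.sInter_subset_of_mem ⟨isUIdeal_gammaU V S, subset_rfl⟩)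
    (subset_gammaU V _)

end GammaU

theorem upsilon_subset_phi_general
    (V : Set (Set P)) (S : Set P) :
    Upsilon V S ⊆ GammaU V S :=
  upsIter_subset_of_isUIdeal
    (isUIdeal_uGamma_of_fixed (isUIdeal_gammaU V S).1 (gammaU_idem V S))
    (subset_gammaU V S) _

theorem upsilon_subset_phi
    (V : Set (Set P)) (hV : IsJoinSpec V) (S : Set P) :
    Upsilon V S ⊆ GammaU V S :=
  upsilon_subset_phi_general V S
end

section
/- Let 𝒱 be a join-specification of P with radius σ and Φ = Γ_𝒱. If the complete lattice of Φ-closed sets is not a frame, then there exist T ∈ 𝒱 and p ∈ P with p ≤ ⋁T such that ↓p ∩ ⋁_{t∈T} ↓t ≠ ⋁_{t∈T} (↓p ∩ ↓t) in the lattice of Φ-closed sets. Consequently, the lattice of Φ-closed sets fails to be σ-distributive. -/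
universe u

variable {P : Type u} [PartialOrder P]

lemma subset_GammaU (U : Set (Set P)) (S : Set P) : S ⊆ GammaU U S := by
  intro x hx I hI
  exact hI.2 hx

lemma isUIdeal_GammaU (U : Set (Set P)) (S : Set P) : IsUIdeal U (GammaU U S) := by
  constructor
  · intro a b hba ha I hI
    exact hI.1.1 hba (ha I hI)
  · intro T hT hTsub j hj I hI
    exact hI.1.2 T hT (fun t ht => hTsub ht I hI) j hj

lemma GammaU_subset {U : Set (Set P)} {S I : Set P} (hI : IsUIdeal U I) (hS : S ⊆ I) :
    GammaU U S ⊆ I := fun x hx => hx I ⟨hI, hS⟩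

lemma GammaU_of_ideal {U : Set (Set P)} {I : Set P} (hI : IsUIdeal U I) :
    GammaU U I = I :=
  Set.Subset.antisymm (GammaU_subset hI subset_rfl) (subset_GammaU U I)

lemma isUIdeal_inter {U : Set (Set P)} {I J : Set P} (hI : IsUIdeal U I)
    (hJ : IsUIdeal U J) : IsUIdeal U (I ∩ J) := by
  constructor
  · intro a b hba ha
    exact ⟨hI.1 hba ha.1, hJ.1 hba ha.2⟩
  · intro T hT hTsub j hj
    exact ⟨hI.2 T hT (fun t ht => (hTsub ht).1) j hj,
           hJ.2 T hT (fun t ht => (hTsub ht).2) j hj⟩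

lemma isUIdeal_down (U : Set (Set P)) (p : P) : IsUIdeal U {q : P | q ≤ p} := by
  constructor
  · intro a b hba ha
    exact hba.trans ha
  · intro T _ hTsub j hj
    exact hj.2 (fun t ht => hTsub ht)

theorem not_frame_gives_failure_on_V
    (V : Set (Set P)) (hV : IsJoinSpec V)
    (hnot : ¬ (∀ I : Set P, GammaU V I = I →
      ∀ 𝒦 : Set (Set P), (∀ K ∈ 𝒦, GammaU V K = K) →
        I ∩ GammaU V (⋃₀ 𝒦) = GammaU V (⋃ K ∈ 𝒦, I ∩ K))) :
    (∃ T ∈ V, ∃ p j : P, IsLUB T j ∧ p ≤ j ∧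
      {q : P | q ≤ p} ∩ GammaU V (⋃ t ∈ T, {q : P | q ≤ t}) ≠
        GammaU V (⋃ t ∈ T, ({q : P | q ≤ p} ∩ {q : P | q ≤ t}))) ∧
    (∃ I : Set P, GammaU V I = I ∧ ∃ 𝒦 : Set (Set P),
      (∀ K ∈ 𝒦, GammaU V K = K) ∧ Cardinal.mk 𝒦 < radius V ∧
      I ∩ GammaU V (⋃₀ 𝒦) ≠ GammaU V (⋃ K ∈ 𝒦, I ∩ K)) := by
  have key : ∃ T ∈ V, ∃ p j : P, IsLUB T j ∧ p ≤ j ∧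
      {q : P | q ≤ p} ∩ GammaU V (⋃ t ∈ T, {q : P | q ≤ t}) ≠
        GammaU V (⋃ t ∈ T, ({q : P | q ≤ p} ∩ {q : P | q ≤ t})) := by
    by_contra h
    push_neg at h
    apply hnot
    intro I hI 𝒦 h𝒦
    set J := GammaU V (⋃ K ∈ 𝒦, I ∩ K) with hJdef
    have hIideal : IsUIdeal V I := hI ▸ isUIdeal_GammaU V I
    have hJideal : IsUIdeal V J := isUIdeal_GammaU V _
    apply Set.Subset.antisymm
    · have hC : IsUIdeal V {q : P | I ∩ {x : P | x ≤ q} ⊆ J} := by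
        constructor
        · intro a b hba ha x hx
          exact ha ⟨hx.1, hx.2.trans hba⟩
        · intro T hT hTC jj hjj x hx
          obtain ⟨hxI, hxj⟩ := hx
          have hjlub : IsLUB T jj := hjj
          obtain ⟨jT, hjT⟩ : ∃ j, IsLUB T j := ⟨jj, hjj⟩
          have heq := h T hT x jj hjj hxj
          have hjmem : jj ∈ GammaU V (⋃ t ∈ T, {q : P | q ≤ t}) := by
            refine (isUIdeal_GammaU V _).2 T hT ?_ jj hjj
            intro t ht
            exact subset_GammaU V _ (Set.mem_biUnion ht (le_refl t))
          have hx2 : x ∈ {q : P | q ≤ x} ∩ GammaU V (⋃ t ∈ T, {q : P | q ≤ t}) :=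
            ⟨le_refl x, (isUIdeal_GammaU V _).1 hxj hjmem⟩
          rw [heq] at hx2
          refine GammaU_subset hJideal ?_ hx2
          intro y hy
          obtain ⟨s, ⟨t, rfl⟩, hy2⟩ := hy
          simp only [Set.mem_iUnion] at hy2
          obtain ⟨ht, hyx, hyt⟩ := hy2
          exact hTC ht ⟨hIideal.1 hyx hxI, hyt⟩
      have h₀ : ⋃₀ 𝒦 ⊆ {q : P | I ∩ {x : P | x ≤ q} ⊆ J} := by
        rintro q ⟨K, hK, hqK⟩ x ⟨hxI, hxq⟩
        have hKideal : IsUIdeal V K := h𝒦 K hK ▸ isUIdeal_GammaU V K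
        exact subset_GammaU V _ (Set.mem_biUnion hK ⟨hxI, hKideal.1 hxq hqK⟩)
      rintro x ⟨hxI, hxG⟩
      exact GammaU_subset hC h₀ hxG ⟨hxI, le_refl x⟩
    · apply GammaU_subset (isUIdeal_inter hIideal (isUIdeal_GammaU V _))
      rintro x hx
      simp only [Set.mem_iUnion] at hx
      obtain ⟨K, hK, hxI, hxK⟩ := hx
      exact ⟨hxI, subset_GammaU V _ ⟨K, hK, hxK⟩⟩
  refine ⟨key, ?_⟩
  obtain ⟨T, hT, p, j, hj, hpj, hne⟩ := key
  refine ⟨{q : P | q ≤ p}, GammaU_of_ideal (isUIdeal_down V p),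
    (fun t => {q : P | q ≤ t}) '' T, ?_, ?_, ?_⟩
  · rintro K ⟨t, ht, rfl⟩
    exact GammaU_of_ideal (isUIdeal_down V t)
  · calc Cardinal.mk ((fun t => {q : P | q ≤ t}) '' T) ≤ Cardinal.mk T :=
          Cardinal.mk_image_le
      _ < Order.succ (Cardinal.mk T) := Order.lt_succ _
      _ ≤ radius V := le_ciSup (Cardinal.bddAbove_range _) (⟨T, hT⟩ : V)
  · rw [Set.sUnion_image, Set.biUnion_image]
    exact hne
end

section
/- For any poset P, the complete lattice of all down-sets of P closed under existing finite joins (ordered by inclusion) is a frame if and only if it is distributive. -/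
/-!
Distributivity gives the frame law for finitely many ideals; the infinite case reduces to it
because ideal joins are finitary. Fix `I` and let `T = Γ(⋃_{K ∈ 𝒦} I ∩ K)`. The points `x` with
`↓x ∩ I ⊆ T` form an ideal: if `j` is the join of a finite `S` of such points, then
`↓j ∩ I ⊆ I ∩ Γ(⋃_{s ∈ S} ↓s) = Γ(⋃_{s ∈ S} I ∩ ↓s) ⊆ T`. This ideal contains every `K ∈ 𝒦`,
hence `Γ(⋃ 𝒦)`, so `I ∩ Γ(⋃ 𝒦) ⊆ T`.
-/

universe u

variable {P : Type u} [PartialOrder P]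

/-- The join-specification of all nonempty finite subsets with existing joins. -/
def finSpec (P : Type u) [PartialOrder P] : Set (Set P) :=
  {S | S.Finite ∧ S.Nonempty ∧ ∃ j, IsLUB S j}

variable {U : Set (Set P)}

theorem IsUIdeal.sInter {𝒜 : Set (Set P)} (h : ∀ A ∈ 𝒜, IsUIdeal U A) :
    IsUIdeal U (⋂₀ 𝒜) :=
  ⟨isLowerSet_sInter fun A hA => (h A hA).1,
    fun S hS hSA j hj A hA => (h A hA).2 S hS (fun _ hx => hSA hx A hA) j hj⟩

theorem IsUIdeal.inter {I J : Set P} (hI : IsUIdeal U I) (hJ : IsUIdeal U J) :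
    IsUIdeal U (I ∩ J) :=
  ⟨hI.1.inter hJ.1, fun S hS hSIJ j hj =>
    ⟨hI.2 S hS (fun _ hx => (hSIJ hx).1) j hj, hJ.2 S hS (fun _ hx => (hSIJ hx).2) j hj⟩⟩

theorem isUIdeal_Iic (p : P) : IsUIdeal U (Set.Iic p) :=
  ⟨isLowerSet_Iic p, fun _ _ hS _ hj => hj.2 hS⟩

theorem isUIdeal_gammaU_s16 (S : Set P) : IsUIdeal U (GammaU U S) :=
  IsUIdeal.sInter fun _ hA => hA.1

theorem subset_gammaU_s16 (S : Set P) : S ⊆ GammaU U S :=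
  Set.subset_sInter fun _ hA => hA.2

theorem gammaU_subset {S I : Set P} (hI : IsUIdeal U I) (hSI : S ⊆ I) : GammaU U S ⊆ I :=
  Set.sInter_subset_of_mem ⟨hI, hSI⟩

theorem gammaU_eq_self_iff {I : Set P} : GammaU U I = I ↔ IsUIdeal U I :=
  ⟨fun h => h ▸ isUIdeal_gammaU_s16 I,
    fun hI => (gammaU_subset hI subset_rfl).antisymm (subset_gammaU_s16 I)⟩

theorem gammaU_union_gammaU (X Y : Set P) : GammaU U (X ∪ GammaU U Y) = GammaU U (X ∪ Y) :=
  have hY : GammaU U Y ⊆ GammaU U (X ∪ Y) :=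
    gammaU_subset (isUIdeal_gammaU_s16 _) (Set.subset_union_right.trans (subset_gammaU_s16 _))
  (gammaU_subset (isUIdeal_gammaU_s16 _)
      (Set.union_subset (Set.subset_union_left.trans (subset_gammaU_s16 _)) hY)).antisymm
    (gammaU_subset (isUIdeal_gammaU_s16 _)
      ((Set.union_subset_union_right X (subset_gammaU_s16 Y)).trans (subset_gammaU_s16 _)))

theorem gammaU_biUnion_inter_subset {I : Set P} (hI : IsUIdeal U I) (𝒦 : Set (Set P)) :
    GammaU U (⋃ K ∈ 𝒦, I ∩ K) ⊆ I ∩ GammaU U (⋃₀ 𝒦) :=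
  gammaU_subset (hI.inter (isUIdeal_gammaU_s16 _)) <| Set.iUnion₂_subset fun _ hK =>
    Set.inter_subset_inter_right I ((Set.subset_sUnion_of_mem hK).trans (subset_gammaU_s16 _))

variable (U) in
def UIdealDistribLaw : Prop :=
  ∀ I K₁ K₂ : Set P, IsUIdeal U I → IsUIdeal U K₁ → IsUIdeal U K₂ →
    I ∩ GammaU U (K₁ ∪ K₂) = GammaU U (I ∩ K₁ ∪ I ∩ K₂)

variable (U) in
def UIdealFrameLaw : Prop :=
  ∀ I : Set P, IsUIdeal U I → ∀ 𝒦 : Set (Set P), (∀ K ∈ 𝒦, IsUIdeal U K) →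
    I ∩ GammaU U (⋃₀ 𝒦) = GammaU U (⋃ K ∈ 𝒦, I ∩ K)

theorem UIdealFrameLaw.distribLaw (h : UIdealFrameLaw U) : UIdealDistribLaw U := by
  intro I K₁ K₂ hI hK₁ hK₂
  have hpair := h I hI {K₁, K₂} (by rintro _ (rfl | rfl) <;> assumption)
  rwa [Set.sUnion_pair, Set.biUnion_pair] at hpair

namespace UIdealDistribLaw

theorem inter_gammaU_biUnion (hd : UIdealDistribLaw U) {ι : Type*} {I : Set P}
    (hI : IsUIdeal U I) {s : Set ι} (hs : s.Finite) {A : ι → Set P}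
    (hA : ∀ i ∈ s, IsUIdeal U (A i)) :
    I ∩ GammaU U (⋃ i ∈ s, A i) = GammaU U (⋃ i ∈ s, I ∩ A i) := by
  induction s, hs using Set.Finite.induction_on with
  | empty =>
    simpa only [Set.biUnion_empty] using
      Set.inter_eq_right.2 (gammaU_subset hI (Set.empty_subset I))
  | @insert a s _ _ ih =>
    have hAs : ∀ i ∈ s, IsUIdeal U (A i) := fun i hi => hA i (Set.mem_insert_of_mem a hi)
    simp only [Set.biUnion_insert]
    rw [← gammaU_union_gammaU, hd I _ _ hI (hA a (Set.mem_insert a s)) (isUIdeal_gammaU_s16 _),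
      ih hAs, gammaU_union_gammaU]

theorem isUIdeal_setOf_Iic_inter_subset (hd : UIdealDistribLaw U) (hU : ∀ S ∈ U, S.Finite)
    {I T : Set P} (hI : IsUIdeal U I) (hT : IsUIdeal U T) :
    IsUIdeal U {x | Set.Iic x ∩ I ⊆ T} := by
  refine ⟨fun _ _ hba ha => (Set.inter_subset_inter_left I (Set.Iic_subset_Iic.2 hba)).trans ha,
    ?_⟩
  intro S hS hSC j hj
  have hj_mem : j ∈ GammaU U (⋃ s ∈ S, Set.Iic s) := (isUIdeal_gammaU_s16 _).2 S hS
    (fun _ hs => subset_gammaU_s16 _ (Set.mem_biUnion hs Set.self_mem_Iic)) j hj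
  calc Set.Iic j ∩ I
      ⊆ I ∩ GammaU U (⋃ s ∈ S, Set.Iic s) := fun z ⟨hzj, hzI⟩ =>
        ⟨hzI, (isUIdeal_gammaU_s16 _).1 hzj hj_mem⟩
    _ = GammaU U (⋃ s ∈ S, I ∩ Set.Iic s) :=
        hd.inter_gammaU_biUnion hI (hU S hS) fun s _ => isUIdeal_Iic s
    _ ⊆ T := gammaU_subset hT <| Set.iUnion₂_subset fun s hs =>
        (Set.inter_comm I _).subset.trans (hSC hs)

theorem frameLaw (hd : UIdealDistribLaw U) (hU : ∀ S ∈ U, S.Finite) : UIdealFrameLaw U := by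
  intro I hI 𝒦 h𝒦
  refine Set.Subset.antisymm ?_ (gammaU_biUnion_inter_subset hI 𝒦)
  set T := GammaU U (⋃ K ∈ 𝒦, I ∩ K)
  have h𝒦C : ⋃₀ 𝒦 ⊆ {x | Set.Iic x ∩ I ⊆ T} := by
    rintro x ⟨K, hK, hxK⟩ z ⟨hzx, hzI⟩
    exact subset_gammaU_s16 _ (Set.mem_biUnion hK ⟨hzI, (h𝒦 K hK).1 hzx hxK⟩)
  rintro x ⟨hxI, hx⟩
  exact gammaU_subset (hd.isUIdeal_setOf_Iic_inter_subset hU hI (isUIdeal_gammaU_s16 _)) h𝒦C hx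
    ⟨le_rfl, hxI⟩

end UIdealDistribLaw

theorem finite_join_ideals_frame_iff_distributive :
    (∀ I : Set P, GammaU (finSpec P) I = I →
      ∀ 𝒦 : Set (Set P), (∀ K ∈ 𝒦, GammaU (finSpec P) K = K) →
        I ∩ GammaU (finSpec P) (⋃₀ 𝒦) = GammaU (finSpec P) (⋃ K ∈ 𝒦, I ∩ K)) ↔
    (∀ I K₁ K₂ : Set P, GammaU (finSpec P) I = I → GammaU (finSpec P) K₁ = K₁ →
      GammaU (finSpec P) K₂ = K₂ →
        I ∩ GammaU (finSpec P) (K₁ ∪ K₂) = GammaU (finSpec P) ((I ∩ K₁) ∪ (I ∩ K₂))) := by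
  simp only [gammaU_eq_self_iff]
  exact ⟨UIdealFrameLaw.distribLaw, fun hd => UIdealDistribLaw.frameLaw hd fun _ hS => hS.1⟩
end

section
/- Every LMD poset P (i.e., whenever a ∧ (b ∨ c) exists in P, then (a ∧ b) ∨ (a ∧ c) exists and equals it) admits an (ω,3)-representation: an order embedding into a powerset lattice preserving all existing finite meets and all existing binary joins. -/
/-!
Represent `p` by the set of prime join ideals (lower sets closed under existing binary joins
whose complement is closed under existing finite meets) that omit it; finite meets and binary
joins are then preserved by primeness and by join-closure. To separate `p ≰ q`, take by Zorn a
maximal join ideal `M` containing `q` but not `p`. For `s ∉ M`, maximality puts `p` in the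
join ideal generated by `M ∪ ↓s`, and LMD shows that this property passes from every `s ∈ S` to
`⋀ S`: an element below a binary join `u ∨ v` is the join of its meets with `u` and `v`, so a
derivation of membership can be pushed below `⋀ S`. Hence `M` is prime.
-/

universe u

variable {P : Type u} [PartialOrder P]

lemma Set.eq_empty_or_singleton_or_pair_of_encard_lt_three {α : Type*} {S : Set α}
    (h : S.encard < 3) : S = ∅ ∨ (∃ b, S = {b}) ∨ ∃ b c, S = {b, c} := by
  obtain ⟨n, hn⟩ := ENat.ne_top_iff_exists.mp h.ne_top
  rw [← hn] at h
  norm_cast at h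
  interval_cases n
  · exact Or.inl (Set.encard_eq_zero.mp hn.symm)
  · exact Or.inr (Or.inl (Set.encard_eq_one.mp hn.symm))
  · obtain ⟨b, c, -, rfl⟩ := Set.encard_eq_two.mp hn.symm
    exact Or.inr (Or.inr ⟨b, c, rfl⟩)

lemma isGLB_pair_of_le {a b : P} (h : a ≤ b) : IsGLB ({a, b} : Set P) a :=
  IsLeast.isGLB ⟨Set.mem_insert a {b}, by simp [h]⟩

variable (P) in
/-- Local meet-distributivity. -/
def IsLMD : Prop :=
  ∀ a b c : P, ∀ j, IsLUB ({b, c} : Set P) j → ∀ m, IsGLB ({a, j} : Set P) m →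
    ∃ mb mc, IsGLB ({a, b} : Set P) mb ∧ IsGLB ({a, c} : Set P) mc ∧ IsLUB ({mb, mc} : Set P) m

structure IsJoinIdeal (I : Set P) : Prop where
  isLowerSet : IsLowerSet I
  lub_pair_mem : ∀ ⦃a b j : P⦄, a ∈ I → b ∈ I → IsLUB {a, b} j → j ∈ I

structure IsPrimeJoinIdeal (I : Set P) : Prop extends IsJoinIdeal I where
  nonempty : I.Nonempty
  exists_mem_of_isGLB_mem : ∀ ⦃S : Set P⦄ ⦃m : P⦄, S.Finite → IsGLB S m → m ∈ I → ∃ s ∈ S, s ∈ I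

inductive JoinSpan (B : Set P) : Set P
  | subset {x : P} : x ∈ B → JoinSpan B x
  | le {x y : P} : JoinSpan B y → x ≤ y → JoinSpan B x
  | lub_pair {x y j : P} : JoinSpan B x → JoinSpan B y → IsLUB {x, y} j → JoinSpan B j

lemma isJoinIdeal_Iic (a : P) : IsJoinIdeal (Set.Iic a) where
  isLowerSet := isLowerSet_Iic a
  lub_pair_mem _ _ _ ha hb hj := hj.2 fun _ hz => by rcases hz with rfl | rfl <;> assumption

lemma subset_joinSpan (B : Set P) : B ⊆ JoinSpan B := fun _ => JoinSpan.subset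

lemma isJoinIdeal_joinSpan (B : Set P) : IsJoinIdeal (JoinSpan B) where
  isLowerSet _ _ hle hx := JoinSpan.le hx hle
  lub_pair_mem _ _ _ hx hy hj := JoinSpan.lub_pair hx hy hj

namespace IsJoinIdeal

variable {I : Set P}

lemma joinSpan_subset (hI : IsJoinIdeal I) {B : Set P} (hB : B ⊆ I) : JoinSpan B ⊆ I := by
  intro x hx
  induction hx with
  | subset h => exact hB h
  | le _ hle ih => exact hI.isLowerSet hle ih
  | lub_pair _ _ hj ihx ihy => exact hI.lub_pair_mem ihx ihy hj

lemma sUnion_of_isChain {c : Set (Set P)} (hc : IsChain (· ⊆ ·) c)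
    (hI : ∀ I ∈ c, IsJoinIdeal I) :
    IsJoinIdeal (⋃₀ c) where
  isLowerSet := isLowerSet_sUnion fun I hIc => (hI I hIc).isLowerSet
  lub_pair_mem := by
    rintro a b j ⟨I, hIc, haI⟩ ⟨J, hJc, hbJ⟩ hj
    rcases hc.total hIc hJc with hIJ | hJI
    · exact ⟨J, hJc, (hI J hJc).lub_pair_mem (hIJ haI) hbJ hj⟩
    · exact ⟨I, hIc, (hI I hIc).lub_pair_mem haI (hJI hbJ) hj⟩

lemma lub_mem_of_encard_lt_three (hI : IsJoinIdeal I) (hne : I.Nonempty) {S : Set P} {j : P}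
    (hS : S.encard < 3) (hSI : S ⊆ I) (hj : IsLUB S j) : j ∈ I := by
  rcases Set.eq_empty_or_singleton_or_pair_of_encard_lt_three hS with rfl | ⟨b, rfl⟩ | ⟨b, c, rfl⟩
  · obtain ⟨b, hb⟩ := hne
    exact hI.isLowerSet (hj.2 (by simp)) hb
  · exact isLUB_singleton.unique hj ▸ hSI rfl
  · exact hI.lub_pair_mem (hSI (by simp)) (hSI (by simp)) hj

end IsJoinIdeal

namespace IsLMD

variable (hP : IsLMD P)
include hP

/-- LMD splits `x ≤ u ∨ v` as `x = (x ∧ u) ∨ (x ∧ v)`, so the induction descends into the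
derivation of `y` while staying below `x`. -/
lemma mem_of_le_mem_joinSpan {B I : Set P} {s x y : P} (hI : IsJoinIdeal I) (hB : B ⊆ I)
    (hs : Set.Iic x ∩ Set.Iic s ⊆ I) (hy : y ∈ JoinSpan (B ∪ Set.Iic s)) (hxy : x ≤ y) :
    x ∈ I := by
  induction hy generalizing x with
  | subset hy =>
    rcases hy with hyB | hys
    · exact hI.isLowerSet hxy (hB hyB)
    · exact hs ⟨le_rfl, hxy.trans hys⟩
  | le _ hle ih => exact ih hs (hxy.trans hle)
  | lub_pair _ _ hj ihu ihv =>
    obtain ⟨xu, xv, hxu, hxv, hx⟩ := hP x _ _ _ hj x (isGLB_pair_of_le hxy)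
    have hxu_x : xu ≤ x := hxu.1 (by simp)
    have hxv_x : xv ≤ x := hxv.1 (by simp)
    refine hI.lub_pair_mem (ihu ?_ (hxu.1 (by simp))) (ihv ?_ (hxv.1 (by simp))) hx
    · exact fun z hz => hs ⟨hz.1.trans hxu_x, hz.2⟩
    · exact fun z hz => hs ⟨hz.1.trans hxv_x, hz.2⟩

/-- Phrased with lower bounds of `S` rather than its meet, since the meets of subsets of `S`
need not exist. -/
lemma mem_of_forall_mem_joinSpan {B I S : Set P} (hS : S.Finite) (hI : IsJoinIdeal I)
    (hB : B ⊆ I) {x : P} (hx : ∀ s ∈ S, x ∈ JoinSpan (B ∪ Set.Iic s))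
    (hxS : Set.Iic x ∩ lowerBounds S ⊆ I) : x ∈ I := by
  induction S, hS using Set.Finite.induction_on generalizing x with
  | empty => exact hxS ⟨le_rfl, by simp⟩
  | @insert s S _ _ ih =>
    refine hP.mem_of_le_mem_joinSpan hI hB ?_ (hx s (Set.mem_insert s S)) le_rfl
    rintro z ⟨hzx, hzs⟩
    refine ih (fun t ht => JoinSpan.le (hx t (Set.mem_insert_of_mem s ht)) hzx) ?_
    rintro w ⟨hwz, hwS⟩
    exact hxS ⟨hwz.trans hzx, by simp [hwz.trans hzs, hwS]⟩

lemma mem_joinSpan_of_isGLB {B S : Set P} {m x : P} (hS : S.Finite) (hm : IsGLB S m)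
    (hx : ∀ s ∈ S, x ∈ JoinSpan (B ∪ Set.Iic s)) : x ∈ JoinSpan (B ∪ Set.Iic m) :=
  hP.mem_of_forall_mem_joinSpan hS (isJoinIdeal_joinSpan _)
    (Set.subset_union_left.trans (subset_joinSpan _)) hx
    fun _ hz => subset_joinSpan _ (Or.inr (hm.2 hz.2))

end IsLMD

section Separation

variable {p q : P}

lemma exists_maximal_isJoinIdeal (hpq : ¬p ≤ q) :
    ∃ M, Maximal (fun I => IsJoinIdeal I ∧ q ∈ I ∧ p ∉ I) M := by
  obtain ⟨M, -, hM⟩ := zorn_subset_nonempty {I | IsJoinIdeal I ∧ q ∈ I ∧ p ∉ I}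
    (fun c hc hchain ⟨I, hIc⟩ => ⟨⋃₀ c,
      ⟨IsJoinIdeal.sUnion_of_isChain hchain fun J hJ => (hc hJ).1, ⟨I, hIc, (hc hIc).2.1⟩,
        fun ⟨J, hJc, hpJ⟩ => (hc hJc).2.2 hpJ⟩,
      fun _ => Set.subset_sUnion_of_mem⟩)
    (Set.Iic q) ⟨isJoinIdeal_Iic q, le_rfl, hpq⟩
  exact ⟨M, hM⟩

lemma mem_joinSpan_of_maximal {M : Set P}
    (hM : Maximal (fun I => IsJoinIdeal I ∧ q ∈ I ∧ p ∉ I) M) {s : P} (hs : s ∉ M) :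
    p ∈ JoinSpan (M ∪ Set.Iic s) := by
  by_contra hp
  have hle := hM.2 ⟨isJoinIdeal_joinSpan _, subset_joinSpan _ (Or.inl hM.1.2.1), hp⟩
    (Set.subset_union_left.trans (subset_joinSpan _))
  exact hs (hle (subset_joinSpan _ (Or.inr le_rfl)))

lemma IsLMD.isPrimeJoinIdeal_of_maximal (hP : IsLMD P) {M : Set P}
    (hM : Maximal (fun I => IsJoinIdeal I ∧ q ∈ I ∧ p ∉ I) M) : IsPrimeJoinIdeal M where
  toIsJoinIdeal := hM.1.1
  nonempty := ⟨q, hM.1.2.1⟩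
  exists_mem_of_isGLB_mem S m hS hm hmM := by
    by_contra! hSM
    have hpm := hP.mem_joinSpan_of_isGLB hS hm fun s hs => mem_joinSpan_of_maximal hM (hSM s hs)
    exact hM.1.2.2 (hM.1.1.joinSpan_subset
      (Set.union_subset subset_rfl fun _ hz => hM.1.1.isLowerSet hz hmM) hpm)

lemma IsLMD.exists_isPrimeJoinIdeal (hP : IsLMD P) (hpq : ¬p ≤ q) :
    ∃ I, IsPrimeJoinIdeal I ∧ q ∈ I ∧ p ∉ I :=
  let ⟨M, hM⟩ := exists_maximal_isJoinIdeal hpq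
  ⟨M, hP.isPrimeJoinIdeal_of_maximal hM, hM.1.2⟩

end Separation

def primeRep (p : P) : Set {I : Set P // IsPrimeJoinIdeal I} := {I | p ∉ I.1}

lemma IsLMD.primeRep_subset_primeRep_iff (hP : IsLMD P) {p q : P} :
    primeRep p ⊆ primeRep q ↔ p ≤ q := by
  refine ⟨fun h => ?_, fun hpq I hp hq => hp (I.2.isLowerSet hpq hq)⟩
  by_contra hpq
  obtain ⟨I, hI, hqI, hpI⟩ := hP.exists_isPrimeJoinIdeal hpq
  exact h (show ⟨I, hI⟩ ∈ primeRep p from hpI) hqI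

lemma primeRep_of_isGLB {S : Set P} {m : P} (hS : S.Finite) (hm : IsGLB S m) :
    primeRep m = ⋂ s ∈ S, primeRep s := by
  ext I
  simp only [primeRep, Set.mem_ofPred_eq, Set.mem_iInter]
  refine ⟨fun hmI s hs hsI => hmI (I.2.isLowerSet (hm.1 hs) hsI), fun h hmI => ?_⟩
  obtain ⟨s, hs, hsI⟩ := I.2.exists_mem_of_isGLB_mem hS hm hmI
  exact h s hs hsI

lemma primeRep_of_isLUB {S : Set P} {j : P} (hS : S.encard < 3) (hj : IsLUB S j) :
    primeRep j = ⋃ s ∈ S, primeRep s := by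
  ext I
  simp only [primeRep, Set.mem_ofPred_eq, Set.mem_iUnion, exists_prop]
  refine ⟨fun hjI => ?_, fun ⟨s, hs, hsI⟩ hjI => hsI (I.2.isLowerSet (hj.1 hs) hjI)⟩
  by_contra! hSI
  exact hjI (I.2.lub_mem_of_encard_lt_three I.2.nonempty hS hSI hj)

theorem LMD_implies_omega_three_representable
    (hLMD : ∀ a b c : P, ∀ j, IsLUB ({b, c} : Set P) j → ∀ m, IsGLB ({a, j} : Set P) m →
      ∃ mb mc, IsGLB ({a, b} : Set P) mb ∧ IsGLB ({a, c} : Set P) mc ∧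
        IsLUB ({mb, mc} : Set P) m) :
    ∃ (X : Type u) (h : P → Set X),
      (∀ p q : P, h p ⊆ h q ↔ p ≤ q) ∧
      (∀ (S : Set P) (m : P), S.Finite → IsGLB S m → h m = ⋂ s ∈ S, h s) ∧
      (∀ (S : Set P) (j : P), Cardinal.mk S < 3 → IsLUB S j → h j = ⋃ s ∈ S, h s) :=
  ⟨_, primeRep, fun _ _ => IsLMD.primeRep_subset_primeRep_iff hLMD,
    fun _ _ hS hm => primeRep_of_isGLB hS hm,
    fun _ _ hS hj => primeRep_of_isLUB (Cardinal.toENat_lt_ofNat.mpr hS) hj⟩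
end

section
/- Let P be the 4-element poset with elements a, b, c, t where the only nontrivial order relations are b ≤ t, c ≤ t, c ≤ a. Then a ∧ (b ∨ c) exists and equals c, but a ∧ b does not exist; hence P is not LMD. Nevertheless, for every down-set S of P, the smallest down-set closed under existing finite joins containing S equals ↓{⋁T : T a nonempty finite subset of S with existing join}; i.e., P satisfies the Hickman–Monk ω-distributivity condition while failing LMD_3. -/
universe u

variable {P : Type u} [PartialOrder P]

theorem HM_omega_without_LMD
    (a b c t : P)
    (hdist : List.Pairwise (· ≠ ·) [a, b, c, t])
    (hall : ∀ u : P, u = a ∨ u = b ∨ u = c ∨ u = t)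
    (hord : ∀ u v : P, u ≤ v ↔
      (u = v ∨ (u = b ∧ v = t) ∨ (u = c ∧ v = t) ∨ (u = c ∧ v = a))) :
    IsLUB ({b, c} : Set P) t ∧
    IsGLB ({a, t} : Set P) c ∧
    (¬ ∃ m, IsGLB ({a, b} : Set P) m) ∧
    (¬ ∀ a' b' c' : P, ∀ j, IsLUB ({b', c'} : Set P) j →
      ∀ m, IsGLB ({a', j} : Set P) m →
        ∃ mb mc, IsGLB ({a', b'} : Set P) mb ∧ IsGLB ({a', c'} : Set P) mc ∧
          IsLUB ({mb, mc} : Set P) m) ∧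
    (∀ S : Set P, IsLowerSet S →
      GammaU (finSpec P) S = dcl {j | ∃ T, T ⊆ S ∧ T.Finite ∧ T.Nonempty ∧ IsLUB T j}) := by
  have h1 := List.pairwise_cons.mp hdist
  have h2 := List.pairwise_cons.mp h1.2
  have h3 := List.pairwise_cons.mp h2.2
  have hab : a ≠ b := h1.1 b (by simp)
  have hac : a ≠ c := h1.1 c (by simp)
  have hat : a ≠ t := h1.1 t (by simp)
  have hbc : b ≠ c := h2.1 c (by simp)
  have hbt : b ≠ t := h2.1 t (by simp)
  have hct : c ≠ t := h3.1 t (by simp)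
  clear hdist h1 h2 h3
  have hlub : IsLUB ({b, c} : Set P) t := by
    constructor
    · rintro x (rfl | rfl)
      · exact (hord x t).mpr (by tauto)
      · exact (hord x t).mpr (by tauto)
    · intro v hv
      have h1 := (hord b v).mp (hv (by left; rfl))
      have h2 := (hord c v).mp (hv (by right; rfl))
      have hvt : v = t := by
        rcases h1 with h1 | h1 | h1 | h1 <;> rcases h2 with h2 | h2 | h2 | h2 <;>
          (first
          | exact h1.2 | exact h2.2 | exact h1.1 | exact h2.1
          | exact absurd h1.1 hbc | exact absurd h2.1 hbc.symm
          | exact absurd h1.2 hat | exact absurd h2.2 hat | exact absurd h2.2 hat.symm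
          | exact absurd h2.2 hbt | exact absurd h2.2 hab.symm
          | exact absurd (h1.trans h2.symm) hbc | exact absurd (h1.trans h2.2) hab.symm
          | exact absurd (h1.symm.trans h2) hat | exact absurd (h1.symm.trans h2.1) hab
          | exact absurd (h1.symm.trans h2) hab | exact absurd (h1.1.symm.trans h2) hbc.symm
          | tauto)
      exact (hord t v).mpr (by tauto)
  have hglb : IsGLB ({a, t} : Set P) c := by
    constructor
    · rintro x (rfl | rfl)
      · exact (hord c x).mpr (by tauto)
      · exact (hord c x).mpr (by tauto)
    · intro v hv
      have h1 := (hord v a).mp (hv (by left; rfl))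
      have h2 := (hord v t).mp (hv (by right; rfl))
      have hvc : v = c := by
        rcases h1 with h1 | h1 | h1 | h1 <;> rcases h2 with h2 | h2 | h2 | h2 <;>
          (first
          | exact h1.2 | exact h2.2 | exact h1.1 | exact h2.1
          | exact absurd h1.1 hbc | exact absurd h2.1 hbc.symm
          | exact absurd h1.2 hat | exact absurd h2.2 hat | exact absurd h2.2 hat.symm
          | exact absurd h2.2 hbt | exact absurd h2.2 hab.symm
          | exact absurd (h1.trans h2.symm) hbc | exact absurd (h1.trans h2.2) hab.symm
          | exact absurd (h1.symm.trans h2) hat | exact absurd (h1.symm.trans h2.1) hab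
          | exact absurd (h1.symm.trans h2) hab | exact absurd (h1.1.symm.trans h2) hbc.symm
          | tauto)
      exact (hord v c).mpr (by tauto)
  have hnoab : ¬ ∃ m, IsGLB ({a, b} : Set P) m := by
    rintro ⟨m, hm, -⟩
    have h1 := (hord m a).mp (hm (by left; rfl))
    have h2 := (hord m b).mp (hm (by right; rfl))
    rcases h1 with h1 | h1 | h1 | h1 <;> rcases h2 with h2 | h2 | h2 | h2 <;>
          (first
          | exact h1.2 | exact h2.2 | exact h1.1 | exact h2.1
          | exact absurd h1.1 hbc | exact absurd h2.1 hbc.symm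
          | exact absurd h1.2 hat | exact absurd h2.2 hat | exact absurd h2.2 hat.symm
          | exact absurd h2.2 hbt | exact absurd h2.2 hab.symm
          | exact absurd (h1.trans h2.symm) hbc | exact absurd (h1.trans h2.2) hab.symm
          | exact absurd (h1.symm.trans h2) hat | exact absurd (h1.symm.trans h2.1) hab
          | exact absurd (h1.symm.trans h2) hab | exact absurd (h1.1.symm.trans h2) hbc.symm
          | tauto)
  -- characterization of least upper bounds in this poset
  have lub_char : ∀ T : Set P, T.Nonempty → ∀ j, IsLUB T j →
      j ∈ T ∨ (b ∈ T ∧ c ∈ T ∧ j = t) := by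
    rintro T ⟨x, hx⟩ j ⟨hub, hlst⟩
    rcases hall j with hj | hj | hj | hj
    · -- j = a
      by_cases haT : a ∈ T
      · left; rwa [hj]
      · exfalso
        have hsub : ∀ y ∈ T, y = c := by
          intro y hy
          have h := (hord y j).mp (hub hy)
          rw [hj] at h
          rcases h with h | h | h | h
          · exact absurd (h ▸ hy) haT
          · exact absurd h.2 hat
          · exact absurd h.2 hat
          · exact h.1
        have hjc : j ≤ c := hlst (fun y hy => le_of_eq (hsub y hy))
        have h := (hord j c).mp hjc
        rw [hj] at h
        tauto
    · -- j = b
      left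
      have h := (hord x j).mp (hub hx)
      rw [hj] at h
      have hxb : x = b := by tauto
      rw [hj, ← hxb]; exact hx
    · -- j = c
      left
      have h := (hord x j).mp (hub hx)
      rw [hj] at h
      have hxc : x = c := by tauto
      rw [hj, ← hxc]; exact hx
    · -- j = t
      by_cases htT : t ∈ T
      · left; rwa [hj]
      · have hsub : ∀ y ∈ T, y = b ∨ y = c := by
          intro y hy
          have h := (hord y j).mp (hub hy)
          rw [hj] at h
          rcases h with h | h | h | h
          · exact absurd (h ▸ hy) htT
          · exact Or.inl h.1
          · exact Or.inr h.1
          · exact absurd h.2.symm hat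
        by_cases hbT : b ∈ T
        · by_cases hcT : c ∈ T
          · exact Or.inr ⟨hbT, hcT, hj⟩
          · exfalso
            have hjb : j ≤ b := hlst (fun y hy => by
              rcases hsub y hy with h | h
              · exact le_of_eq h
              · exact absurd (h ▸ hy) hcT)
            have h := (hord j b).mp hjb
            rw [hj] at h
            tauto
        · exfalso
          have hjc : j ≤ c := hlst (fun y hy => by
            rcases hsub y hy with h | h
            · exact absurd (h ▸ hy) hbT
            · exact le_of_eq h)
          have h := (hord j c).mp hjc
          rw [hj] at h
          tauto
  refine ⟨hlub, hglb, hnoab, ?_, ?_⟩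
  · intro h
    obtain ⟨mb, mc, hmb, -, -⟩ := h a b c t hlub c hglb
    exact hnoab ⟨mb, hmb⟩
  · intro S hS
    set J := {j | ∃ T, T ⊆ S ∧ T.Finite ∧ T.Nonempty ∧ IsLUB T j} with hJ
    have hSJ : S ⊆ dcl J := by
      intro s hs
      exact ⟨s, ⟨{s}, Set.singleton_subset_iff.mpr hs, Set.finite_singleton s,
        Set.singleton_nonempty s, isLUB_singleton⟩, le_refl s⟩
    have hmem : ∀ x, x ∈ dcl J → x ∈ S ∨ t ∈ J := by
      rintro x ⟨jx, ⟨T', hT'S, hT'f, hT'ne, hT'lub⟩, hxj⟩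
      rcases lub_char T' hT'ne jx hT'lub with hjT | ⟨hbT, hcT, hjt⟩
      · left; exact hS hxj (hT'S hjT)
      · right; exact ⟨T', hT'S, hT'f, hT'ne, hjt ▸ hT'lub⟩
    have hRideal : IsUIdeal (finSpec P) (dcl J) := by
      constructor
      · rintro x y hyx ⟨jx, hjx, hxj⟩
        exact ⟨jx, hjx, le_trans hyx hxj⟩
      · rintro T ⟨hTf, hTne, -⟩ hTsub j hjlub
        rcases lub_char T hTne j hjlub with hjT | ⟨hbT, hcT, hjt⟩
        · exact hTsub hjT
        · rw [hjt]
          rcases hmem b (hTsub hbT) with hbS | htJ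
          · rcases hmem c (hTsub hcT) with hcS | htJ
            · exact ⟨t, ⟨{b, c}, by rintro y (rfl | rfl) <;> assumption,
                Set.toFinite _, ⟨b, by left; rfl⟩, hlub⟩, le_refl t⟩
            · exact ⟨t, htJ, le_refl t⟩
          · exact ⟨t, htJ, le_refl t⟩
    apply subset_antisymm
    · exact Set.sInter_subset_of_mem ⟨hRideal, hSJ⟩
    · rintro x ⟨j, ⟨T, hTS, hTf, hTne, hTlub⟩, hxj⟩
      rintro I ⟨⟨hIlow, hIclose⟩, hSI⟩
      have hjI : j ∈ I :=
        hIclose T ⟨hTf, hTne, j, hTlub⟩ (hTS.trans hSI) j hTlub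
      exact hIlow hxj hjI
end
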